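/- Let k be an algebraically closed field and d ≥ 1 an integer with char(k) ∤ 2d. Then for every β ∈ k, the polynomial φ_d(X) − β ∈ k[X] has at least d/2 distinct roots in k, i.e., twice the number of its distinct roots is at least d. -/

import Mathlib

open Polynomial Finset

/-!
Write `β = z + z⁻¹`. Since `φ_d(t + t⁻¹) = t ^ d + t⁻¹ ^ d`, the solutions of `φ_d(x) = β` are
exactly the values `t + t⁻¹` at the `d`-th roots `t` of `z`. There are `d` of these roots because
`char k ∤ d`, and `t ↦ t + t⁻¹` is at most two-to-one, since `t + t⁻¹ = s + s⁻¹` forces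
`t ∈ {s, s⁻¹}`.
-/

theorem add_inv_eq_add_inv_iff {K : Type*} [Field K] {a b : K} (ha : a ≠ 0) (hb : b ≠ 0) :
    a + a⁻¹ = b + b⁻¹ ↔ a = b ∨ a = b⁻¹ := by
  have key : a + a⁻¹ - (b + b⁻¹) = (a - b) * (a * b - 1) / (a * b) := by
    field_simp; ring
  rw [← sub_eq_zero, key, div_eq_zero_iff, mul_eq_zero, sub_eq_zero, sub_eq_zero,
    mul_eq_one_iff_eq_inv₀ hb]
  simp [ha, hb]

theorem card_le_two_mul_card_image_add_inv {K : Type*} [Field K] [DecidableEq K] (s : Finset K)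
    (hs : ∀ t ∈ s, t ≠ 0) : #s ≤ 2 * #(s.image fun t ↦ t + t⁻¹) := by
  refine card_le_mul_card_image s 2 fun b hb ↦ ?_
  obtain ⟨c, hc, rfl⟩ := mem_image.mp hb
  calc #{t ∈ s | t + t⁻¹ = c + c⁻¹} ≤ #{c, c⁻¹} := by
        refine card_le_card fun t ht ↦ ?_
        obtain ⟨htmem, hteq⟩ := mem_filter.mp ht
        simpa using (add_inv_eq_add_inv_iff (hs t htmem) (hs c hc)).mp hteq
    _ ≤ 2 := card_le_two

theorem IsAlgClosed.exists_add_inv_eq {k : Type*} [Field k] [IsAlgClosed k] (β : k) :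
    ∃ z ≠ 0, z + z⁻¹ = β := by
  have hdeg : (X ^ 2 - C β * X + 1 : k[X]).degree = 2 := by compute_degree!
  obtain ⟨z, hz⟩ := IsAlgClosed.exists_root _ (hdeg ▸ two_ne_zero)
  have hz' : z ^ 2 - β * z + 1 = 0 := by simpa using hz
  have hz0 : z ≠ 0 := by rintro rfl; simp at hz'
  exact ⟨z, hz0, by field_simp; linear_combination hz'⟩

theorem IsAlgClosed.card_nthRootsFinset {k : Type*} [Field k] [IsAlgClosed k] {n : ℕ} {a : k}
    (hn : (n : k) ≠ 0) (ha : a ≠ 0) : #(nthRootsFinset n a) = n := by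
  classical
  rw [nthRootsFinset_def, nthRoots, Multiset.toFinset_card_of_nodup
    (nodup_roots (separable_X_pow_sub_C a hn ha)),
    IsAlgClosed.card_roots_eq_natDegree, natDegree_X_pow_sub_C]

theorem dickson_one_one_eval_add_inv_eq_add_inv_iff {K : Type*} [Field K] {n : ℕ} {z s : K}
    (hz : z ≠ 0) (hs : s ≠ 0) :
    (dickson 1 (1 : K) n).eval (s + s⁻¹) = z + z⁻¹ ↔ s ^ n = z ∨ s⁻¹ ^ n = z := by
  rw [dickson_one_one_eval_add_inv s s⁻¹ (mul_inv_cancel₀ hs), inv_pow,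
    add_inv_eq_add_inv_iff (pow_ne_zero n hs) hz, ← inv_eq_iff_eq_inv]

theorem IsAlgClosed.setOf_dickson_one_one_eval_eq_add_inv {k : Type*} [Field k] [IsAlgClosed k]
    [DecidableEq k] {n : ℕ} (hn : 0 < n) {z : k} (hz : z ≠ 0) :
    {x : k | (dickson 1 (1 : k) n).eval x = z + z⁻¹} =
      ↑((nthRootsFinset n z).image fun t ↦ t + t⁻¹) := by
  ext x
  simp only [Set.mem_ofPred_eq, coe_image, Set.mem_image, mem_coe, mem_nthRootsFinset hn]
  constructor
  · intro hx
    obtain ⟨s, hs, rfl⟩ := IsAlgClosed.exists_add_inv_eq x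
    rcases (dickson_one_one_eval_add_inv_eq_add_inv_iff hz hs).mp hx with h | h
    · exact ⟨s, h, rfl⟩
    · exact ⟨s⁻¹, h, by rw [inv_inv, add_comm]⟩
  · rintro ⟨t, ht, rfl⟩
    have ht0 : t ≠ 0 := by rintro rfl; exact hz (by rw [← ht, zero_pow hn.ne'])
    exact (dickson_one_one_eval_add_inv_eq_add_inv_iff hz ht0).mpr (Or.inl ht)

theorem stmt19_general (k : Type*) [Field k] [IsAlgClosed k] (d : ℕ)
    (hchar : ¬ (ringChar k ∣ 2 * d)) (β : k) :
    d ≤ 2 * Set.ncard {x : k | Polynomial.aeval x (dickson 1 (1 : k) d) = β} := by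
  classical
  have hd : (d : k) ≠ 0 := fun h ↦ hchar (dvd_mul_of_dvd_right ((ringChar.spec k d).mp h) 2)
  have hd0 : 0 < d := Nat.pos_of_ne_zero (by rintro rfl; simp at hd)
  obtain ⟨z, hz, rfl⟩ := IsAlgClosed.exists_add_inv_eq β
  simp only [coe_aeval_eq_eval]
  rw [IsAlgClosed.setOf_dickson_one_one_eval_eq_add_inv hd0 hz, Set.ncard_coe_finset]
  calc d = #(nthRootsFinset d z) := (IsAlgClosed.card_nthRootsFinset hd hz).symm
    _ ≤ _ := card_le_two_mul_card_image_add_inv _ fun t ht ↦ ne_zero_of_mem_nthRootsFinset hz ht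

/-- over an algebraically closed field `k` with `char k ∤ 2d`
(and `d ≥ 1`), for every `β ∈ k` the polynomial `φ_d(X) - β` has at least `d/2`
distinct roots in `k`: twice the number of its distinct roots is at least `d`. -/
theorem stmt19 (k : Type*) [Field k] [IsAlgClosed k] (d : ℕ) (hd : 1 ≤ d)
    (hchar : ¬ (ringChar k ∣ 2 * d)) (β : k) :
    d ≤ 2 * Set.ncard {x : k | Polynomial.aeval x (dickson 1 (1 : k) d) = β} :=
  stmt19_general k d hchar β
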